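/- arXiv:math/0610762 — 2 statements merged into one kernel-verified Lean document; each statement's English description precedes it below -/
import Mathlib

section
/- Let N ≥ 2, α > 1 and p > 0. Let h : [0,∞) → ℝ be continuous with h(0) = 0, positive and C² on (0,∞), and satisfy h'' + ((N-1)/r)h' = (1/α)h^{-α} − p on (0,∞) (a radial rupture solution). Then there exists a constant c_2 > 0 such that h(r) ≤ c_2 · r^{2/(α+1)} for all r ∈ [0,∞). -/
open Set Filter
open scoped Topology

noncomputable section

set_option maxHeartbeats 1000000 in
/-- Growth upper bound for radial rupture solutions of
`h'' + ((N-1)/r) h' = (1/α) h^(-α) - p`: there is `c₂ > 0` with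
`h(r) ≤ c₂ r^(2/(α+1))` on `[0, ∞)`. -/
theorem rupture_growth_upper_bound
    (N : ℕ) (hN : 2 ≤ N) (α p : ℝ) (hα : 1 < α) (hp : 0 < p)
    (h : ℝ → ℝ)
    (hcont : ContinuousOn h (Ici 0))
    (h0 : h 0 = 0)
    (hpos : ∀ r ∈ Ioi (0 : ℝ), 0 < h r)
    (hreg : ContDiffOn ℝ 2 h (Ioi 0))
    (hode : ∀ r ∈ Ioi (0 : ℝ),
      deriv (deriv h) r + ((N : ℝ) - 1) / r * deriv h r = 1 / α * h r ^ (-α) - p) :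
    ∃ c₂ : ℝ, 0 < c₂ ∧ ∀ r ∈ Ici (0 : ℝ), h r ≤ c₂ * r ^ (2 / (α + 1)) := by
  obtain ⟨M, rfl⟩ : ∃ M, N = M + 2 := ⟨N - 2, by omega⟩
  have hα0 : (0:ℝ) < α := by linarith
  have hα1 : (0:ℝ) < α + 1 := by linarith
  set β : ℝ := 2 / (α + 1) with hβdef
  have hβpos : 0 < β := by positivity
  set γ : ℝ := α / (α + 1) with hγdef
  have hγpos : 0 < γ := by positivity
  have hγlt1 : γ < 1 := by
    rw [hγdef, div_lt_one hα1]; linarith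
  -- basic differentiability facts
  have hdiff : DifferentiableOn ℝ h (Ioi 0) := hreg.differentiableOn (by norm_num)
  have hd1 : ∀ t ∈ Ioi (0:ℝ), HasDerivAt h (deriv h t) t := by
    intro t ht
    exact (hdiff.differentiableAt (isOpen_Ioi.mem_nhds ht)).hasDerivAt
  have hC1 : ContDiffOn ℝ 1 (deriv h) (Ioi 0) :=
    hreg.deriv_of_isOpen isOpen_Ioi (by norm_num)
  have hd2 : ∀ t ∈ Ioi (0:ℝ), HasDerivAt (deriv h) (deriv (deriv h) t) t := by
    intro t ht
    exact ((hC1.differentiableOn (by norm_num)).differentiableAt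
      (isOpen_Ioi.mem_nhds ht)).hasDerivAt
  have hch' : ContinuousOn (deriv h) (Ioi 0) := hC1.continuousOn
  have hchh : ContinuousOn h (Ioi 0) := hcont.mono Ioi_subset_Ici_self
  have htend0 : Tendsto h (𝓝[>] (0:ℝ)) (𝓝 0) := by
    have := (hcont 0 (self_mem_Ici)).tendsto
    rw [h0] at this
    exact this.mono_left (nhdsWithin_mono 0 Ioi_subset_Ici_self)
  -- the function φ(t) = t^(M+1) * h'(t) and its derivative
  set φ : ℝ → ℝ := fun s => s ^ (M+1) * deriv h s with hφdef
  have hφd : ∀ t ∈ Ioi (0:ℝ), HasDerivAt φ (t ^ (M+1) * (1/α * h t ^ (-α) - p)) t := by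
    intro t ht
    have ht0 : (0:ℝ) < t := ht
    have h1 : HasDerivAt (fun s : ℝ => s ^ (M+1)) ((M+1 : ℕ) * t ^ M) t := by
      simpa using hasDerivAt_pow (M+1) t
    have hprod := h1.mul (hd2 t ht)
    refine hprod.congr_deriv (Eq.symm ?_)
    have hodet := hode t ht
    have hcast : ((M + 2 : ℕ) : ℝ) - 1 = (M : ℝ) + 1 := by push_cast; ring
    rw [hcast] at hodet
    have h2' : deriv (deriv h) t = 1/α * h t ^ (-α) - p - ((M:ℝ)+1)/t * deriv h t := by
      linarith
    rw [h2']
    have hpow : (t:ℝ) ^ (M+1) = t ^ M * t := pow_succ t M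
    field_simp [hpow]
    push_cast
    ring
  -- choice of δ and r₀
  have h2αp : (0:ℝ) < 2*α*p := by positivity
  set δ : ℝ := (2*α*p) ^ (-α⁻¹) with hδdef
  have hδ0 : 0 < δ := Real.rpow_pos_of_pos h2αp _
  have hδkey : ∀ x : ℝ, 0 < x → x ≤ δ → p ≤ 1/(2*α) * x ^ (-α) := by
    intro x hx hxδ
    have h1 : δ ^ (-α) ≤ x ^ (-α) :=
      Real.rpow_le_rpow_of_nonpos hx hxδ (by linarith)
    have h2 : δ ^ (-α) = 2*α*p := by
      rw [hδdef, ← Real.rpow_mul h2αp.le]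
      have he : -α⁻¹ * -α = 1 := by
        field_simp
      rw [he, Real.rpow_one]
    rw [h2] at h1
    have hX : 0 ≤ x ^ (-α) := (Real.rpow_pos_of_pos hx _).le
    rw [div_mul_eq_mul_div, le_div_iff₀ (by linarith)]
    nlinarith
  -- choice of r₀
  obtain ⟨ε, hε, hball⟩ := (Metric.tendsto_nhdsWithin_nhds.1
    ((hcont 0 self_mem_Ici).tendsto)) δ hδ0
  set r₀ : ℝ := min (ε/2) 1 with hr₀def
  have hr₀pos : 0 < r₀ := lt_min (by linarith) one_pos
  have hr₀le1 : r₀ ≤ 1 := min_le_right _ _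
  have hsmall : ∀ t ∈ Ioc (0:ℝ) r₀, h t ≤ δ := by
    intro t ht
    have h1 : dist t 0 < ε := by
      rw [Real.dist_eq, sub_zero, abs_of_pos ht.1]
      have := ht.2.trans (min_le_left (ε/2) 1)
      linarith
    have := hball (le_of_lt ht.1 : t ∈ Ici (0:ℝ)) h1
    rw [h0, Real.dist_eq, sub_zero] at this
    exact (le_abs_self _).trans this.le
  have hS : Ioc (0:ℝ) r₀ ⊆ Ioi 0 := fun t ht => ht.1
  have hhpos : ∀ t ∈ Ioc (0:ℝ) r₀, 0 < h t := fun t ht => hpos t ht.1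
  have hkey : ∀ t ∈ Ioc (0:ℝ) r₀, 1/(2*α) * h t ^ (-α) ≤ 1/α * h t ^ (-α) - p := by
    intro t ht
    have h1 := hδkey (h t) (hhpos t ht) (hsmall t ht)
    have hX : 0 ≤ h t ^ (-α) := (Real.rpow_pos_of_pos (hhpos t ht) _).le
    have h2 : 1/α * h t ^ (-α) - 1/(2*α) * h t ^ (-α) = 1/(2*α) * h t ^ (-α) := by
      field_simp
      ring
    linarith
  have hkeypos : ∀ t ∈ Ioc (0:ℝ) r₀, 0 < 1/α * h t ^ (-α) - p := by
    intro t ht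
    have := hkey t ht
    have hX : 0 < h t ^ (-α) := Real.rpow_pos_of_pos (hhpos t ht) _
    have : 0 < 1/(2*α) * h t ^ (-α) := by positivity
    linarith [hkey t ht]
  -- φ is strictly monotone on (0, r₀]
  have hφcont : ContinuousOn φ (Ioc 0 r₀) :=
    ((continuous_pow (M+1)).continuousOn).mul (hch'.mono hS)
  have hφmono : StrictMonoOn φ (Ioc 0 r₀) := by
    apply strictMonoOn_of_hasDerivWithinAt_pos (convex_Ioc _ _) hφcont
    · intro t ht
      rw [interior_Ioc] at ht
      exact ((hφd t (Ioo_subset_Ioi_self ht)).hasDerivWithinAt)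
    · intro t ht
      rw [interior_Ioc] at ht
      have ht' : t ∈ Ioc (0:ℝ) r₀ := Ioo_subset_Ioc_self ht
      have h1 : (0:ℝ) < t ^ (M+1) := pow_pos ht.1 _
      exact mul_pos h1 (hkeypos t ht')
  -- h' is nonnegative on (0, r₀]
  have hd0 : ∀ t ∈ Ioc (0:ℝ) r₀, 0 ≤ deriv h t := by
    by_contra hcon
    push_neg at hcon
    obtain ⟨r₁, hr₁, hneg⟩ := hcon
    have hφr₁neg : φ r₁ < 0 := mul_neg_of_pos_of_neg (pow_pos hr₁.1 _) hneg
    set a : ℝ := -(φ r₁) with hadef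
    have hapos : 0 < a := neg_pos.mpr hφr₁neg
    have hφle : ∀ s ∈ Ioc (0:ℝ) r₁, φ s ≤ -a := by
      intro s hs
      have hs' : s ∈ Ioc (0:ℝ) r₀ := ⟨hs.1, hs.2.trans hr₁.2⟩
      have h1 : φ s ≤ φ r₁ := by
        rcases eq_or_lt_of_le hs.2 with he | hl
        · rw [he]
        · exact (hφmono hs' hr₁ hl).le
      simpa [hadef] using h1
    have hd'le : ∀ s ∈ Ioc (0:ℝ) r₁, deriv h s + a * s⁻¹ ≤ 0 := by
      intro s hs
      have hs0 : 0 < s := hs.1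
      have hs1 : s ≤ 1 := le_trans (hs.2.trans hr₁.2) hr₀le1
      have hpowle : s^(M+1) ≤ s := by
        calc s^(M+1) ≤ s^1 := pow_le_pow_of_le_one hs0.le hs1 (by omega)
        _ = s := pow_one s
      have hppos : 0 < s^(M+1) := pow_pos hs0 _
      have h1 : s^(M+1) * deriv h s ≤ -a := hφle s hs
      have h2 : deriv h s ≤ -(a / s^(M+1)) := by
        rw [← neg_div, le_div_iff₀ hppos]
        nlinarith [h1]
      have h3 : a * s⁻¹ ≤ a / s^(M+1) := by
        rw [← div_eq_mul_inv]
        gcongr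
      linarith
    have hganti : AntitoneOn (fun s => h s + a * Real.log s) (Ioc 0 r₁) := by
      refine antitoneOn_of_hasDerivWithinAt_nonpos
        (f' := fun s => deriv h s + a * s⁻¹) (convex_Ioc _ _) ?_ ?_ ?_
      · exact (hchh.mono (fun t ht => ht.1)).add
          (continuousOn_const.mul (Real.continuousOn_log.mono (fun t ht => ne_of_gt ht.1)))
      · intro t ht
        rw [interior_Ioc] at ht
        exact ((hd1 t ht.1).add
          ((Real.hasDerivAt_log (ne_of_gt ht.1)).const_mul a)).hasDerivWithinAt
      · intro t ht
        rw [interior_Ioc] at ht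
        exact hd'le t (Ioo_subset_Ioc_self ht)
    have hlb : ∀ s ∈ Ioc (0:ℝ) r₁,
        (h r₁ + a * Real.log r₁) - a * Real.log s ≤ h s := by
      intro s hs
      have := hganti hs ⟨hr₁.1, le_rfl⟩ hs.2
      simp only at this
      linarith
    have hψ : Tendsto (fun s => (h r₁ + a * Real.log r₁) - a * Real.log s)
        (𝓝[>](0:ℝ)) atTop := by
      simp only [sub_eq_add_neg]
      apply Filter.tendsto_atTop_add_const_left
      have h1 : Tendsto (fun s => a * Real.log s) (𝓝[>](0:ℝ)) atBot :=
        (Real.tendsto_log_nhdsGT_zero).const_mul_atBot hapos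
      exact tendsto_neg_atBot_atTop.comp h1
    have e1 := hψ.eventually_gt_atTop 1
    have e2 : ∀ᶠ s in 𝓝[>](0:ℝ), h s < 1 := htend0.eventually_lt_const one_pos
    have e3 : Ioc (0:ℝ) r₁ ∈ 𝓝[>](0:ℝ) := Ioc_mem_nhdsGT hr₁.1
    obtain ⟨s, ⟨h1s, h2s⟩, h3s⟩ := ((e1.and e2).and e3).exists
    linarith [hlb s h3s]
  -- h is monotone on (0, r₀]
  have hmono : MonotoneOn h (Ioc 0 r₀) := by
    refine monotoneOn_of_hasDerivWithinAt_nonneg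
      (f' := fun s => deriv h s) (convex_Ioc _ _) (hchh.mono hS) ?_ ?_
    · intro t ht
      rw [interior_Ioc] at ht
      exact (hd1 t ht.1).hasDerivWithinAt
    · intro t ht
      rw [interior_Ioc] at ht
      exact hd0 t (Ioo_subset_Ioc_self ht)
  have hφ0 : ∀ t ∈ Ioc (0:ℝ) r₀, 0 ≤ φ t := by
    intro t ht
    exact mul_nonneg (pow_pos ht.1 _).le (hd0 t ht)
  -- pointwise lower bound for h'
  set c₀ : ℝ := 1/(4*α*(M+2)) with hc₀def
  have hc₀pos : 0 < c₀ := by positivity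
  have hlowd : ∀ r ∈ Ioc (0:ℝ) r₀, c₀ * r * h r ^ (-α) ≤ deriv h r := by
    intro r hr
    have hr0 : 0 < r := hr.1
    set K : ℝ := 1/(2*α) * h r ^ (-α) with hKdef
    have hKpos : 0 < K := by
      have := Real.rpow_pos_of_pos (hhpos r hr) (-α)
      positivity
    -- ρ(t) = φ(t) - K/(M+2) * t^(M+2) is monotone on [r/2, r]
    have hρmono : MonotoneOn (fun t => φ t - K/(M+2) * t^(M+2)) (Icc (r/2) r) := by
      have hIcc : Icc (r/2) r ⊆ Ioc (0:ℝ) r₀ := by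
        intro t ht
        exact ⟨lt_of_lt_of_le (by linarith) ht.1, ht.2.trans hr.2⟩
      refine monotoneOn_of_hasDerivWithinAt_nonneg
        (f' := fun t => t^(M+1) * (1/α * h t ^ (-α) - p) - K * t^(M+1))
        (convex_Icc _ _) ?_ ?_ ?_
      · exact (hφcont.mono hIcc).sub
          ((continuousOn_const.mul ((continuous_pow (M+2)).continuousOn)))
      · intro t ht
        rw [interior_Icc] at ht
        have ht' : t ∈ Ioi (0:ℝ) := (hIcc (Ioo_subset_Icc_self ht)).1
        have h1 : HasDerivAt (fun t : ℝ => K/(M+2) * t^(M+2))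
            (K * t^(M+1)) t := by
          have h2 := (hasDerivAt_pow (M+2) t).const_mul (K/((M:ℝ)+2))
          refine h2.congr_deriv (Eq.symm ?_)
          have : ((M:ℝ)+2) ≠ 0 := by positivity
          push_cast
          field_simp
        exact ((hφd t ht').sub h1).hasDerivWithinAt
      · intro t ht
        rw [interior_Icc] at ht
        have ht' : t ∈ Ioc (0:ℝ) r₀ := hIcc (Ioo_subset_Icc_self ht)
        have hmle : h t ≤ h r := hmono ht' hr ht.2.le
        have hrle : h r ^ (-α) ≤ h t ^ (-α) :=
          Real.rpow_le_rpow_of_nonpos (hhpos t ht') hmle (by linarith)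
        have h1 : K ≤ 1/α * h t ^ (-α) - p := by
          have := hkey t ht'
          rw [hKdef]
          have h2 : 1/(2*α) * h r ^ (-α) ≤ 1/(2*α) * h t ^ (-α) := by
            apply mul_le_mul_of_nonneg_left hrle
            positivity
          linarith
        have h2 : (0:ℝ) ≤ t^(M+1) := (pow_pos ht'.1 _).le
        nlinarith [h1, h2]
    -- conclude φ(r) ≥ K/(2(M+2)) * r^(M+2)
    have hhalf : r/2 ∈ Icc (r/2) r := ⟨le_rfl, by linarith⟩
    have hrIcc : r ∈ Icc (r/2) r := ⟨by linarith, le_rfl⟩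
    have h1 := hρmono hhalf hrIcc (by linarith)
    have hφhalf : 0 ≤ φ (r/2) := hφ0 (r/2) ⟨by linarith, by linarith [hr.2]⟩
    have hpow2 : (r/2)^(M+2) = r^(M+2) * (1/2)^(M+2) := by
      rw [← mul_pow]; ring_nf
    have hhalfpow : ((1:ℝ)/2)^(M+2) ≤ 1/2 := by
      calc ((1:ℝ)/2)^(M+2) ≤ (1/2:ℝ)^1 := by
            apply pow_le_pow_of_le_one (by norm_num) (by norm_num) (by omega)
      _ = 1/2 := pow_one _
    have hrpowpos : (0:ℝ) < r^(M+2) := pow_pos hr0 _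
    have h2 : K/((M:ℝ)+2) * (r^(M+2) - (r/2)^(M+2)) ≤ φ r := by
      simp only at h1
      linarith
    have hMpos : (0:ℝ) < (M:ℝ)+2 := by positivity
    have hrM1 : (0:ℝ) < r^(M+1) := pow_pos hr0 _
    have hφr : φ r = r^(M+1) * deriv h r := rfl
    have h4 : r^(M+2) = r^(M+1) * r := pow_succ r (M+1)
    have hle : (r/2)^(M+2) ≤ r^(M+2)/2 := by
      have := mul_le_mul_of_nonneg_left hhalfpow hrpowpos.le
      rw [hpow2]; linarith
    have hKM : (0:ℝ) ≤ K/((M:ℝ)+2) := div_nonneg hKpos.le (by positivity)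
    have h5 : K/((M:ℝ)+2) * (r^(M+2)/2) ≤ K/((M:ℝ)+2) * (r^(M+2) - (r/2)^(M+2)) :=
      mul_le_mul_of_nonneg_left (by linarith) hKM
    have h6 := le_trans h5 h2
    rw [hKdef, h4, hφr] at h6
    have key : c₀ * r * h r ^ (-α) * r^(M+1) ≤ deriv h r * r^(M+1) := by
      have heq : c₀ * r * h r ^ (-α) * r^(M+1)
          = 1/(2*α) * h r ^ (-α) /((M:ℝ)+2) * (r^(M+1) * r/2) := by
        rw [hc₀def]
        field_simp
        ring
      rw [heq, mul_comm (deriv h r)]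
      calc 1/(2*α) * h r ^ (-α) /((M:ℝ)+2) * (r^(M+1) * r/2)
          = 1/(2*α) * h r ^ (-α) /((M:ℝ)+2) * (r^(M+1) * r/2) := rfl
      _ ≤ r^(M+1) * deriv h r := by
          refine le_trans (le_of_eq ?_) h6
          ring
    exact le_of_mul_le_mul_right key hrM1
  -- lower bound for h: h(r)^(α+1) ≥ c₁' r²
  set c₁' : ℝ := c₀*(α+1)/2 with hc₁'def
  have hc₁'pos : 0 < c₁' := by
    rw [hc₁'def]
    have : (0:ℝ) < α + 1 := hα1
    positivity
  have hlow : ∀ r ∈ Ioc (0:ℝ) r₀, c₁' * r^2 ≤ h r ^ (α+1) := by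
    have humono : MonotoneOn (fun t => h t ^ (α+1) - c₁' * t^2) (Ioc 0 r₀) := by
      refine monotoneOn_of_hasDerivWithinAt_nonneg
        (f' := fun t => deriv h t * (α+1) * h t ^ α - c₀*(α+1) * t)
        (convex_Ioc _ _) ?_ ?_ ?_
      · refine ContinuousOn.sub ?_ (continuousOn_const.mul ((continuous_pow 2).continuousOn))
        exact ContinuousOn.rpow_const (hchh.mono hS) (fun t ht => Or.inr (by linarith))
      · intro t ht
        rw [interior_Ioc] at ht
        have ht' : t ∈ Ioi (0:ℝ) := ht.1
        have h1 : HasDerivAt (fun t => h t ^ (α+1)) (deriv h t * (α+1) * h t ^ α) t := by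
          have := (hd1 t ht').rpow_const (p := α+1) (Or.inr (by linarith))
          have he : α + 1 - 1 = α := by ring
          rwa [he] at this
        have h2 : HasDerivAt (fun t : ℝ => c₁' * t^2) (c₀*(α+1) * t) t := by
          have := (hasDerivAt_pow 2 t).const_mul c₁'
          refine this.congr_deriv (Eq.symm ?_)
          rw [hc₁'def]
          push_cast
          ring
        exact (h1.sub h2).hasDerivWithinAt
      · intro t ht
        rw [interior_Ioc] at ht
        have ht' : t ∈ Ioc (0:ℝ) r₀ := Ioo_subset_Ioc_self ht
        have h1 := hlowd t ht'
        have hX : (0:ℝ) < h t ^ α := Real.rpow_pos_of_pos (hhpos t ht') _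
        have h2 : c₀ * t * h t ^ (-α) * h t ^ α ≤ deriv h t * h t ^ α :=
          mul_le_mul_of_nonneg_right h1 hX.le
        have h3 : h t ^ (-α) * h t ^ α = 1 := by
          rw [← Real.rpow_add (hhpos t ht')]
          norm_num
        have h4 : c₀ * t ≤ deriv h t * h t ^ α := by
          calc c₀ * t = c₀ * t * (h t ^ (-α) * h t ^ α) := by rw [h3]; ring
          _ = c₀ * t * h t ^ (-α) * h t ^ α := by ring
          _ ≤ deriv h t * h t ^ α := h2
        show 0 ≤ deriv h t * (α+1) * h t ^ α - c₀*(α+1) * t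
        nlinarith [h4, hα1]
    intro r hr
    have hu0 : Tendsto (fun t => h t ^ (α+1) - c₁' * t^2) (𝓝[>] (0:ℝ)) (𝓝 0) := by
      have h1 : Tendsto (fun t => h t ^ (α+1)) (𝓝[>] (0:ℝ)) (𝓝 0) := by
        have hc : ContinuousAt (fun y : ℝ => y ^ (α+1)) 0 :=
          Real.continuousAt_rpow_const 0 (α+1) (Or.inr (by linarith))
        have := hc.tendsto.comp htend0
        simpa [Function.comp_def, Real.zero_rpow (by linarith : α + 1 ≠ 0)] using this
      have h2 : Tendsto (fun t : ℝ => c₁' * t^2) (𝓝[>] (0:ℝ)) (𝓝 0) := by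
        have : Tendsto (fun t : ℝ => c₁' * t^2) (𝓝 (0:ℝ)) (𝓝 (c₁' * 0^2)) :=
          (continuous_const.mul (continuous_pow 2)).tendsto 0
        simpa using this.mono_left nhdsWithin_le_nhds
      simpa using h1.sub h2
    have hev : ∀ᶠ s in 𝓝[>] (0:ℝ),
        (fun t => h t ^ (α+1) - c₁' * t^2) s ≤ h r ^ (α+1) - c₁' * r^2 := by
      filter_upwards [Ioc_mem_nhdsGT hr.1] with s hs
      exact humono ⟨hs.1, hs.2.trans hr.2⟩ hr hs.2
    have := le_of_tendsto hu0 hev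
    linarith
  -- upper bound for h^(-α)
  have hhpow : ∀ t ∈ Ioc (0:ℝ) r₀, h t ^ (-α) ≤ c₁' ^ (-γ) * t ^ (-(2*γ)) := by
    intro t ht
    have ht0 : 0 < t := ht.1
    have h1 : c₁' * t^2 ≤ h t ^ (α+1) := hlow t ht
    have hbpos : (0:ℝ) < c₁' * t^2 := by positivity
    have h2 : (h t ^ (α+1)) ^ (-γ) ≤ (c₁' * t^2) ^ (-γ) :=
      Real.rpow_le_rpow_of_nonpos hbpos h1 (by linarith)
    have h3 : (h t ^ (α+1)) ^ (-γ) = h t ^ (-α) := by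
      rw [← Real.rpow_mul (hhpos t ht).le]
      congr 1
      rw [hγdef]
      field_simp
    have h4 : (c₁' * t^2) ^ (-γ) = c₁' ^ (-γ) * t ^ (-(2*γ)) := by
      rw [Real.mul_rpow hc₁'pos.le (by positivity)]
      congr 1
      rw [← Real.rpow_natCast t 2, ← Real.rpow_mul ht0.le]
      norm_num
    rw [h3, h4] at h2
    exact h2
  -- upper bound for φ
  set X : ℝ := ((M:ℝ)+2) - 2*γ with hXdef
  have hXpos : 0 < X := by
    rw [hXdef]
    have : (0:ℝ) ≤ (M:ℝ) := Nat.cast_nonneg M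
    linarith [hγlt1]
  set C : ℝ := c₁' ^ (-γ) / (α * X) with hCdef
  have hCpos : 0 < C := by
    rw [hCdef]
    have h1 : (0:ℝ) < c₁' ^ (-γ) := Real.rpow_pos_of_pos hc₁'pos _
    positivity
  have hwanti : AntitoneOn (fun t => φ t - C * t ^ X) (Ioc 0 r₀) := by
    refine antitoneOn_of_hasDerivWithinAt_nonpos
      (f' := fun t => t^(M+1) * (1/α * h t ^ (-α) - p) - C * (X * t ^ (X - 1)))
      (convex_Ioc _ _) ?_ ?_ ?_
    · refine hφcont.sub (continuousOn_const.mul ?_)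
      exact ContinuousOn.rpow_const continuousOn_id (fun t ht => Or.inl (ne_of_gt ht.1))
    · intro t ht
      rw [interior_Ioc] at ht
      have h1 : HasDerivAt (fun t : ℝ => t ^ X) (X * t ^ (X-1)) t :=
        Real.hasDerivAt_rpow_const (Or.inl (ne_of_gt ht.1))
      exact ((hφd t ht.1).sub (h1.const_mul C)).hasDerivWithinAt
    · intro t ht
      rw [interior_Ioc] at ht
      have ht' : t ∈ Ioc (0:ℝ) r₀ := Ioo_subset_Ioc_self ht
      have ht0 : 0 < t := ht.1
      have h1 : 1/α * h t ^ (-α) - p ≤ 1/α * (c₁' ^ (-γ) * t ^ (-(2*γ))) := by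
        have h2 := hhpow t ht'
        have h3 : 1/α * h t ^ (-α) ≤ 1/α * (c₁' ^ (-γ) * t ^ (-(2*γ))) := by
          apply mul_le_mul_of_nonneg_left h2
          positivity
        linarith
      have h2 : t^(M+1) * (1/α * h t ^ (-α) - p)
          ≤ t^(M+1) * (1/α * (c₁' ^ (-γ) * t ^ (-(2*γ)))) :=
        mul_le_mul_of_nonneg_left h1 (pow_pos ht0 _).le
      have h3 : t^(M+1) * (1/α * (c₁' ^ (-γ) * t ^ (-(2*γ)))) = C * (X * t ^ (X - 1)) := by
        rw [hCdef]
        have h4 : (t:ℝ)^(M+1) = t ^ ((M:ℝ)+1) := by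
          rw [← Real.rpow_natCast t (M+1)]
          push_cast
          ring_nf
        rw [h4, mul_comm ((t:ℝ) ^ ((M:ℝ)+1))]
        rw [mul_assoc (1/α), mul_assoc, ← Real.rpow_add ht0]
        have h5 : -(2*γ) + ((M:ℝ)+1) = X - 1 := by
          rw [hXdef]; ring
        rw [h5]
        have hαX : α * X ≠ 0 := by positivity
        field_simp
      show t^(M+1) * (1/α * h t ^ (-α) - p) - C * (X * t ^ (X - 1)) ≤ 0
      rw [← h3]
      linarith
  -- φ r ≤ C r^X
  have hφub : ∀ r ∈ Ioc (0:ℝ) r₀, φ r ≤ C * r ^ X := by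
    intro r hr
    have hr0 : 0 < r := hr.1
    refine le_of_forall_pos_le_add ?_
    intro e he
    -- find s ∈ (0, r] with φ s < e
    have hsmallφ : ∃ s ∈ Ioc (0:ℝ) r, φ s < e := by
      by_contra hno
      push_neg at hno
      have hlbd : ∀ s ∈ Ioc (0:ℝ) r, e * s⁻¹ ≤ deriv h s := by
        intro s hs
        have hs0 : 0 < s := hs.1
        have hs1 : s ≤ 1 := le_trans (hs.2.trans hr.2) hr₀le1
        have hpowle : s^(M+1) ≤ s := by
          calc s^(M+1) ≤ s^1 := pow_le_pow_of_le_one hs0.le hs1 (by omega)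
          _ = s := pow_one s
        have hppos : 0 < s^(M+1) := pow_pos hs0 _
        have h1 : e ≤ s^(M+1) * deriv h s := hno s hs
        have h2 : e/s^(M+1) ≤ deriv h s := by
          rw [div_le_iff₀ hppos]
          nlinarith [h1]
        have h3 : e * s⁻¹ ≤ e / s^(M+1) := by
          rw [← div_eq_mul_inv]
          gcongr
        linarith
      have hg2 : MonotoneOn (fun s => h s - e * Real.log s) (Ioc 0 r) := by
        refine monotoneOn_of_hasDerivWithinAt_nonneg
          (f' := fun s => deriv h s - e * s⁻¹) (convex_Ioc _ _) ?_ ?_ ?_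
        · exact (hchh.mono (fun t ht => ht.1)).sub
            (continuousOn_const.mul (Real.continuousOn_log.mono (fun t ht => ne_of_gt ht.1)))
        · intro t ht
          rw [interior_Ioc] at ht
          exact ((hd1 t ht.1).sub
            ((Real.hasDerivAt_log (ne_of_gt ht.1)).const_mul e)).hasDerivWithinAt
        · intro t ht
          rw [interior_Ioc] at ht
          have := hlbd t (Ioo_subset_Ioc_self ht)
          linarith
      have hub2 : ∀ s ∈ Ioc (0:ℝ) r, h s ≤ (h r - e * Real.log r) + e * Real.log s := by
        intro s hs
        have := hg2 hs ⟨hr0, le_rfl⟩ hs.2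
        simp only at this
        linarith
      have hbot : Tendsto (fun s => (h r - e * Real.log r) + e * Real.log s)
          (𝓝[>](0:ℝ)) atBot := by
        apply Filter.tendsto_atBot_add_const_left
        exact (Real.tendsto_log_nhdsGT_zero).const_mul_atBot he
      have e1 := hbot.eventually_lt_atBot 0
      have e3 : Ioc (0:ℝ) r ∈ 𝓝[>](0:ℝ) := Ioc_mem_nhdsGT hr0
      obtain ⟨s, h1s, h3s⟩ := (e1.and e3).exists
      have := hub2 s h3s
      have := hpos s h3s.1
      linarith
    obtain ⟨s, hs, hsφ⟩ := hsmallφ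
    have hs' : s ∈ Ioc (0:ℝ) r₀ := ⟨hs.1, hs.2.trans hr.2⟩
    have h1 := hwanti hs' hr hs.2
    simp only at h1
    have h2 : (0:ℝ) ≤ C * s ^ X := by
      have : (0:ℝ) < s ^ X := Real.rpow_pos_of_pos hs.1 _
      positivity
    linarith
  -- pointwise upper bound for h'
  have hupd : ∀ r ∈ Ioc (0:ℝ) r₀, deriv h r ≤ C * r ^ (β - 1) := by
    intro r hr
    have hr0 : 0 < r := hr.1
    have h1 := hφub r hr
    have hrM1 : (0:ℝ) < r^(M+1) := pow_pos hr0 _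
    have h2 : C * r ^ X = C * r ^ (β-1) * r^(M+1) := by
      rw [mul_assoc, ← Real.rpow_natCast r (M+1), ← Real.rpow_add hr0]
      congr 2
      rw [hXdef, hβdef, hγdef]
      push_cast
      field_simp
      ring
    have h3 : deriv h r * r^(M+1) ≤ C * r ^ (β-1) * r^(M+1) := by
      rw [← h2]
      calc deriv h r * r^(M+1) = φ r := by rw [hφdef]; ring
      _ ≤ C * r ^ X := h1
    exact le_of_mul_le_mul_right h3 hrM1
  -- upper bound for h near the origin
  have hup : ∀ r ∈ Ioc (0:ℝ) r₀, h r ≤ (C/β) * r ^ β := by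
    have hqmono : MonotoneOn (fun t => (C/β) * t ^ β - h t) (Ioc 0 r₀) := by
      refine monotoneOn_of_hasDerivWithinAt_nonneg
        (f' := fun t => C * t ^ (β-1) - deriv h t) (convex_Ioc _ _) ?_ ?_ ?_
      · refine ContinuousOn.sub (continuousOn_const.mul ?_) (hchh.mono hS)
        exact ContinuousOn.rpow_const continuousOn_id (fun t ht => Or.inl (ne_of_gt ht.1))
      · intro t ht
        rw [interior_Ioc] at ht
        have h1 : HasDerivAt (fun t : ℝ => t ^ β) (β * t ^ (β-1)) t :=
          Real.hasDerivAt_rpow_const (Or.inl (ne_of_gt ht.1))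
        have h2 := (h1.const_mul (C/β)).sub (hd1 t ht.1)
        have h3 : C/β * (β * t ^ (β-1)) = C * t ^ (β-1) := by
          field_simp
        rw [h3] at h2
        exact h2.hasDerivWithinAt
      · intro t ht
        rw [interior_Ioc] at ht
        have := hupd t (Ioo_subset_Ioc_self ht)
        show 0 ≤ C * t ^ (β-1) - deriv h t
        linarith
    intro r hr
    have hq0 : Tendsto (fun t => (C/β) * t ^ β - h t) (𝓝[>] (0:ℝ)) (𝓝 0) := by
      have h1 : Tendsto (fun t : ℝ => (C/β) * t ^ β) (𝓝[>] (0:ℝ)) (𝓝 0) := by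
        have hc : ContinuousAt (fun y : ℝ => y ^ β) 0 :=
          Real.continuousAt_rpow_const 0 β (Or.inr hβpos.le)
        have h2 : Tendsto (fun t : ℝ => t ^ β) (𝓝[>] (0:ℝ)) (𝓝 (0 ^ β)) :=
          (hc.tendsto).mono_left nhdsWithin_le_nhds
        rw [Real.zero_rpow (ne_of_gt hβpos)] at h2
        have := h2.const_mul (C/β)
        simpa using this
      simpa using h1.sub htend0
    have hev : ∀ᶠ s in 𝓝[>] (0:ℝ),
        (fun t => (C/β) * t ^ β - h t) s ≤ (C/β) * r ^ β - h r := by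
      filter_upwards [Ioc_mem_nhdsGT hr.1] with s hs
      exact hqmono ⟨hs.1, hs.2.trans hr.2⟩ hr hs.2
    have := le_of_tendsto hq0 hev
    linarith
  -- energy bound for large r
  set cα : ℝ := 1/(α*(α-1)) with hcαdef
  have hα1' : (0:ℝ) < α - 1 := by linarith
  have hcαpos : 0 < cα := by
    rw [hcαdef]; positivity
  set E : ℝ → ℝ := fun t => (deriv h t)^2/2 + cα * h t ^ (1-α) + p * h t with hEdef
  have hEd : ∀ t ∈ Ioi (0:ℝ), HasDerivAt E (-(((M:ℝ)+1)/t) * (deriv h t)^2) t := by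
    intro t ht
    have ht0 : (0:ℝ) < t := ht
    have e1 : HasDerivAt (fun s => (deriv h s)^2/2)
        (deriv (deriv h) t * deriv h t) t := by
      have := ((hd2 t ht).pow 2).div_const 2
      refine this.congr_deriv (Eq.symm ?_)
      ring_nf
    have e2 : HasDerivAt (fun s => cα * h s ^ (1-α))
        (cα * (deriv h t * (1-α) * h t ^ (-α))) t := by
      have := ((hd1 t ht).rpow_const (p := 1-α) (Or.inl (hpos t ht).ne')).const_mul cα
      have he : 1 - α - 1 = -α := by ring
      rwa [he] at this
    have e3 : HasDerivAt (fun s => p * h s) (p * deriv h t) t := (hd1 t ht).const_mul p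
    have esum := (e1.add e2).add e3
    refine esum.congr_deriv (Eq.symm ?_)
    have hodet := hode t ht
    have hcast : ((M + 2 : ℕ) : ℝ) - 1 = (M : ℝ) + 1 := by push_cast; ring
    rw [hcast] at hodet
    have hode' : deriv (deriv h) t = 1/α * h t ^ (-α) - p - ((M:ℝ)+1)/t * deriv h t := by
      linarith
    rw [hode', hcαdef]
    have hαne : α ≠ 0 := ne_of_gt hα0
    have hα1ne : α - 1 ≠ 0 := ne_of_gt hα1'
    have htne : t ≠ 0 := ne_of_gt ht0
    field_simp
    ring
  have hIci : Ici r₀ ⊆ Ioi (0:ℝ) := fun t ht => lt_of_lt_of_le hr₀pos ht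
  have hEanti : AntitoneOn E (Ici r₀) := by
    refine antitoneOn_of_hasDerivWithinAt_nonpos
      (f' := fun t => -(((M:ℝ)+1)/t) * (deriv h t)^2) (convex_Ici _) ?_ ?_ ?_
    · refine ContinuousOn.add (ContinuousOn.add ?_ ?_) (continuousOn_const.mul (hchh.mono hIci))
      · exact ((hch'.mono hIci).pow 2).div_const 2
      · exact continuousOn_const.mul
          (ContinuousOn.rpow_const (hchh.mono hIci)
            (fun t ht => Or.inl (ne_of_gt (hpos t (hIci ht)))))
    · intro t ht
      rw [interior_Ici] at ht
      exact (hEd t (hIci (mem_Ici.mpr (le_of_lt ht)))).hasDerivWithinAt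
    · intro t ht
      rw [interior_Ici] at ht
      have ht0 : (0:ℝ) < t := lt_trans hr₀pos ht
      have h1 : (0:ℝ) ≤ ((M:ℝ)+1)/t * (deriv h t)^2 := by positivity
      show -(((M:ℝ)+1)/t) * (deriv h t)^2 ≤ 0
      nlinarith [h1]
  have hEub : ∀ r ∈ Ici r₀, h r ≤ E r₀ / p := by
    intro r hr
    have h1 : E r ≤ E r₀ := hEanti self_mem_Ici hr hr
    have hrpos : (0:ℝ) < r := hIci hr
    have h2 : (0:ℝ) < h r ^ (1-α) := Real.rpow_pos_of_pos (hpos r hrpos) _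
    have h3 : p * h r ≤ E r := by
      rw [hEdef]
      have h4 : (0:ℝ) ≤ (deriv h r)^2/2 := by positivity
      have h5 : (0:ℝ) < cα * h r ^ (1-α) := by positivity
      simp only
      linarith
    rw [le_div_iff₀ hp]
    calc h r * p = p * h r := by ring
    _ ≤ E r₀ := le_trans h3 h1
  have hMpos' : (0:ℝ) < E r₀ / p :=
    lt_of_lt_of_le (hpos r₀ hr₀pos) (hEub r₀ self_mem_Ici)
  -- final assembly
  refine ⟨max (C/β) ((E r₀/p) / r₀ ^ β), ?_, ?_⟩
  · exact lt_max_of_lt_left (by positivity)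
  · intro r hr
    rcases eq_or_lt_of_le (mem_Ici.mp hr) with he | hrpos
    · rw [← he, h0, Real.zero_rpow (ne_of_gt hβpos), mul_zero]
    · have hrβ : (0:ℝ) < r ^ β := Real.rpow_pos_of_pos hrpos _
      rcases le_or_gt r r₀ with hle | hgt
      · have h1 := hup r ⟨hrpos, hle⟩
        calc h r ≤ (C/β) * r ^ β := h1
        _ ≤ max (C/β) ((E r₀/p) / r₀ ^ β) * r ^ β :=
            mul_le_mul_of_nonneg_right (le_max_left _ _) hrβ.le
      · have hr₀β : (0:ℝ) < r₀ ^ β := Real.rpow_pos_of_pos hr₀pos _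
        have h1 := hEub r (le_of_lt hgt)
        have h2 : r₀ ^ β ≤ r ^ β :=
          Real.rpow_le_rpow hr₀pos.le (le_of_lt hgt) hβpos.le
        calc h r ≤ E r₀ / p := h1
        _ = ((E r₀/p) / r₀ ^ β) * r₀ ^ β := by field_simp
        _ ≤ ((E r₀/p) / r₀ ^ β) * r ^ β := by
            apply mul_le_mul_of_nonneg_left h2
            positivity
        _ ≤ max (C/β) ((E r₀/p) / r₀ ^ β) * r ^ β :=
            mul_le_mul_of_nonneg_right (le_max_right _ _) hrβ.le
end
end

section
/- Let A ∈ ℝ and let B : [T,∞) → ℝ be continuous with lim_{t→∞} B(t) = B_0 ∈ ℝ. Let λ_1, λ_2 ∈ ℂ be the two roots of λ² − Aλ + B_0 = 0 and set λ_m = min( Re λ_1, Re λ_2 ). Suppose u is a C² real-valued function on [T,∞) satisfying u''(t) − A·u'(t) + B(t)·u(t) = 0 for all t ≥ T, and suppose there exist constants λ_0 < λ_m and c > 0 such that |u(t)| ≤ c·e^{λ_0 t} for all t ≥ T. Then u(t) = 0 for all t ≥ T. -/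
open Set Filter MeasureTheory Topology Complex

noncomputable section

namespace DecayRigidity
lemma exp_decay_integrableOn (t : ℝ) {b : ℝ} (hb : 0 < b) (K : ℝ) :
    IntegrableOn (fun s : ℝ => K * Real.exp (-(b * s))) (Ioi t) := by
  exact (by simpa [neg_mul] using ((exp_neg_integrableOn_Ioi t hb).const_mul K) :
    Integrable (fun s : ℝ => K * Real.exp (-(b * s))) (volume.restrict (Ioi t)))

lemma tendsto_exp_decay (K : ℝ) {b : ℝ} (hb : 0 < b) :
    Tendsto (fun s : ℝ => K * Real.exp (-(b * s))) atTop (𝓝 0) := by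
  have h1 : Tendsto (fun s : ℝ => b * s) atTop atTop :=
    Tendsto.const_mul_atTop hb tendsto_id
  have h2 : Tendsto (fun s : ℝ => Real.exp (-(b * s))) atTop (𝓝 0) :=
    Real.tendsto_exp_neg_atTop_nhds_zero.comp h1
  simpa using h2.const_mul K

lemma integral_exp_decay (t : ℝ) {b : ℝ} (hb : 0 < b) :
    ∫ s in Ioi t, Real.exp (-(b * s)) = Real.exp (-(b * t)) / b := by
  have hd : ∀ x ∈ Ici t, HasDerivAt (fun s : ℝ => -Real.exp (-(b * s)) / b)
      (Real.exp (-(b * x))) x := by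
    intro x _
    have h1 : HasDerivAt (fun s : ℝ => -(b * s)) (-b) x := by
      simpa using ((hasDerivAt_id x).const_mul (-b))
    have h2 := (h1.exp).neg.div_const b
    refine h2.congr_deriv (Eq.symm ?_)
    rw [eq_div_iff hb.ne']; ring
  have hint : IntegrableOn (fun s : ℝ => Real.exp (-(b * s))) (Ioi t) := by
    simpa [neg_mul] using (exp_neg_integrableOn_Ioi t hb)
  have hlim : Tendsto (fun s : ℝ => -Real.exp (-(b * s)) / b) atTop (𝓝 0) := by
    have := tendsto_exp_decay (-1) hb
    have h2 := this.div_const b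
    simpa [neg_div, neg_mul] using h2
  have := MeasureTheory.integral_Ioi_of_hasDerivAt_of_tendsto' hd hint hlim
  rw [this]
  ring

lemma tail_estimate {φ φ' : ℝ → ℂ} {T₁ K b : ℝ}
    (hD : ∀ t ∈ Ioi T₁, HasDerivAt φ (φ' t) t)
    (hco : ContinuousOn φ (Ici T₁)) (hco' : ContinuousOn φ' (Ioi T₁))
    (hb : 0 < b) (hK : ∀ s ∈ Ioi T₁, ‖φ' s‖ ≤ K * Real.exp (-(b * s))) :
    ∃ L : ℂ, Tendsto φ atTop (𝓝 L) ∧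
      ∀ t ∈ Ici T₁, ‖φ t - L‖ ≤ K * Real.exp (-(b * t)) / b := by
  have hmeas : AEStronglyMeasurable φ' (volume.restrict (Ioi T₁)) :=
    hco'.aestronglyMeasurable measurableSet_Ioi
  have hint : IntegrableOn φ' (Ioi T₁) := by
    refine Integrable.mono' (exp_decay_integrableOn T₁ hb K) hmeas ?_
    exact (ae_restrict_iff' measurableSet_Ioi).2 (Eventually.of_forall hK)
  have hlim : Tendsto φ atTop (𝓝 (limUnder atTop φ)) :=
    tendsto_limUnder_of_hasDerivAt_of_integrableOn_Ioi hD hint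
  refine ⟨limUnder atTop φ, hlim, ?_⟩
  intro t ht
  have hint' : IntegrableOn φ' (Ioi t) := hint.mono_set (Ioi_subset_Ioi ht)
  have heq : ∫ s in Ioi t, φ' s = limUnder atTop φ - φ t := by
    refine integral_Ioi_of_hasDerivAt_of_tendsto
      ((hco.continuousWithinAt ht).mono (Ici_subset_Ici.2 ht))
      (fun x hx => hD x (show T₁ < x from lt_of_le_of_lt ht hx)) hint' hlim
  have h1 : φ t - limUnder atTop φ = -∫ s in Ioi t, φ' s := by
    rw [heq]; ring
  rw [h1, norm_neg]
  calc ‖∫ s in Ioi t, φ' s‖ ≤ ∫ s in Ioi t, ‖φ' s‖ :=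
        norm_integral_le_integral_norm _
    _ ≤ ∫ s in Ioi t, K * Real.exp (-(b * s)) := by
        refine setIntegral_mono_on hint'.norm
          (exp_decay_integrableOn t hb K) measurableSet_Ioi ?_
        exact fun s hs => hK s (show T₁ < s from lt_of_le_of_lt ht hs)
    _ = K * Real.exp (-(b * t)) / b := by
        rw [MeasureTheory.integral_const_mul, integral_exp_decay t hb, mul_div_assoc]

lemma forced_zero_linear {L w : ℂ} {a : ℝ}
    (h : Tendsto (fun t : ℝ => L * ((t : ℂ) - (a : ℂ))) atTop (𝓝 w)) : L = 0 := by
  by_contra hL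
  have h2 : Tendsto (fun t : ℝ => ‖L‖ * (t - a)) atTop atTop := by
    have := (tendsto_atTop_add_const_right atTop (-a) tendsto_id).const_mul_atTop
      (norm_pos_iff.2 hL)
    exact this.congr fun t => by simp only [id_eq]; ring
  have h3 : Tendsto (fun t : ℝ => ‖L * ((t : ℂ) - (a : ℂ))‖) atTop atTop := by
    refine h2.congr' ?_
    filter_upwards [eventually_ge_atTop a] with t hta
    have hn : ‖(t : ℂ) - (a : ℂ)‖ = t - a := by
      rw [show ((t : ℂ) - (a : ℂ)) = ((t - a : ℝ) : ℂ) by push_cast; ring,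
        Complex.norm_real, Real.norm_eq_abs]
      exact _root_.abs_of_nonneg (by linarith)
    rw [norm_mul, hn]
  exact not_tendsto_nhds_of_tendsto_atTop h3 _ h.norm

lemma forced_zero_osc {L w : ℂ} {β : ℝ} (hβ : 0 < β)
    (h : Tendsto (fun t : ℝ => L * Complex.exp (((β : ℂ) * Complex.I) * t)) atTop (𝓝 w)) :
    L = 0 := by
  have hβ' : (β : ℝ) ≠ 0 := ne_of_gt hβ
  have hβc : (β : ℂ) ≠ 0 := by exact_mod_cast hβ'
  have hs : Tendsto (fun n : ℕ => (2 * Real.pi / β) * n) atTop atTop := by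
    refine Tendsto.const_mul_atTop (by positivity) tendsto_natCast_atTop_atTop
  have hs' : Tendsto (fun n : ℕ => (2 * Real.pi / β) * n + Real.pi / β) atTop atTop :=
    tendsto_atTop_add_const_right _ _ hs
  have key1 : ∀ n : ℕ, (β : ℂ) * Complex.I * ((2 * Real.pi / β * n : ℝ) : ℂ)
      = (n : ℤ) * (2 * Real.pi * Complex.I) := by
    intro n; push_cast; field_simp [hβc]
  have key2 : ∀ n : ℕ, (β : ℂ) * Complex.I * ((2 * Real.pi / β * n + Real.pi / β : ℝ) : ℂ)
      = (n : ℤ) * (2 * Real.pi * Complex.I) + Real.pi * Complex.I := by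
    intro n; push_cast; field_simp [hβc]
  have e1 : Tendsto (fun _ : ℕ => L) atTop (𝓝 w) := by
    refine (h.comp hs).congr ?_
    intro n
    simp only [Function.comp]
    rw [key1, Complex.exp_int_mul_two_pi_mul_I, mul_one]
  have e2 : Tendsto (fun _ : ℕ => -L) atTop (𝓝 w) := by
    refine (h.comp hs').congr ?_
    intro n
    simp only [Function.comp]
    rw [key2, Complex.exp_add, Complex.exp_int_mul_two_pi_mul_I, Complex.exp_pi_mul_I]
    ring
  have e3 : L = w := tendsto_nhds_unique tendsto_const_nhds e1
  have e4 : -L = w := tendsto_nhds_unique tendsto_const_nhds e2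
  linear_combination (e3 - e4) / 2

lemma forced_zero_exp {L w μ : ℂ} (hre : 0 ≤ μ.re) (hμ : μ ≠ 0)
    (h : Tendsto (fun t : ℝ => L * Complex.exp (μ * t)) atTop (𝓝 w)) : L = 0 := by
  rcases eq_or_lt_of_le hre with hre0 | hrepos
  · have him : μ.im ≠ 0 := by
      intro h0
      exact hμ (Complex.ext (by simp [← hre0]) (by simp [h0]))
    rcases him.lt_or_gt with hlt | hgt
    · have hconj : ∀ t : ℝ, (starRingEnd ℂ) (L * Complex.exp (μ * t))
          = (starRingEnd ℂ) L * Complex.exp ((((-μ.im : ℝ) : ℂ) * Complex.I) * t) := by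
        intro t
        rw [map_mul, ← Complex.exp_conj]
        congr 2
        rw [map_mul, Complex.conj_ofReal]
        congr 1
        refine Complex.ext ?_ ?_ <;> simp [← hre0]
      have hc : Tendsto (fun t : ℝ => (starRingEnd ℂ) L
          * Complex.exp ((((-μ.im : ℝ) : ℂ) * Complex.I) * t)) atTop (𝓝 ((starRingEnd ℂ) w)) := by
        refine Tendsto.congr (fun t => hconj t) ?_
        exact (Complex.continuous_conj.tendsto w).comp h
      have := forced_zero_osc (by linarith) hc
      simpa using this
    · have hμeq : μ = ((μ.im : ℝ) : ℂ) * Complex.I := by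
        refine Complex.ext ?_ ?_ <;> simp [← hre0]
      exact forced_zero_osc (w := w) hgt (hμeq ▸ h)
  · by_contra hL
    have h3 : Tendsto (fun t : ℝ => ‖L * Complex.exp (μ * t)‖) atTop atTop := by
      have h2 : Tendsto (fun t : ℝ => ‖L‖ * Real.exp (μ.re * t)) atTop atTop := by
        refine Tendsto.const_mul_atTop (norm_pos_iff.2 hL) ?_
        exact Real.tendsto_exp_atTop.comp (Tendsto.const_mul_atTop hrepos tendsto_id)
      refine h2.congr ?_
      intro t
      rw [norm_mul, Complex.norm_exp]
      congr 2
      simp [Complex.mul_re]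
    exact not_tendsto_nhds_of_tendsto_atTop h3 _ h.norm

lemma norm_exp_mul_ofReal (z : ℂ) (t : ℝ) :
    ‖Complex.exp (z * t)‖ = Real.exp (z.re * t) := by
  rw [Complex.norm_exp]
  congr 1
  simp [Complex.mul_re]

lemma exp_mul_add (a b : ℂ) (t : ℝ) :
    Complex.exp (a * t) * Complex.exp (b * t) = Complex.exp ((a + b) * t) := by
  rw [← Complex.exp_add]; ring_nf

lemma cont_cexp (z : ℂ) : Continuous fun t : ℝ => Complex.exp (z * t) :=
  Complex.continuous_exp.comp (continuous_const.mul Complex.continuous_ofReal)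

lemma hasDerivAt_cexp_mul (z : ℂ) (t : ℝ) :
    HasDerivAt (fun s : ℝ => Complex.exp (z * s)) (z * Complex.exp (z * t)) t := by
  have h1 : HasDerivAt (fun s : ℝ => (s : ℂ)) 1 t := (hasDerivAt_id t).ofReal_comp
  have h2 := (h1.const_mul z).cexp
  simpa [mul_comm] using h2

lemma core
    (A T B₀ : ℝ) (B : ℝ → ℝ) (l₁ l₂ : ℂ)
    (hsum : l₁ + l₂ = (A : ℂ)) (hprod : l₁ * l₂ = (B₀ : ℂ))
    (hord : l₁.re ≤ l₂.re)
    (hBcont : ContinuousOn B (Ici T))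
    (u : ℝ → ℝ)
    (hucont : ContinuousOn u (Ici T))
    (hu'cont : ContinuousOn (derivWithin u (Ici T)) (Ici T))
    (hu' : ∀ t ∈ Ici T, HasDerivWithinAt u (derivWithin u (Ici T) t) (Ici T) t)
    (hu'' : ∀ t ∈ Ici T, HasDerivWithinAt (derivWithin u (Ici T))
        (derivWithin (derivWithin u (Ici T)) (Ici T) t) (Ici T) t)
    (hode : ∀ t ∈ Ici T,
      derivWithin (derivWithin u (Ici T)) (Ici T) t
        - A * derivWithin u (Ici T) t + B t * u t = 0)
    (l₀ : ℝ) (hl₀ : l₀ < l₁.re)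
    (T₁ ε m : ℝ) (hT₁ : T ≤ T₁) (hε : 0 ≤ ε) (hm : 0 ≤ m)
    (hB : ∀ t ∈ Ici T₁, |B t - B₀| ≤ ε)
    (hub : ∀ t ∈ Ici T₁, |u t| ≤ m * Real.exp (l₀ * t)) :
    ∀ t ∈ Ici T₁, |u t| ≤ ε * m / ((l₂.re - l₀) * (l₁.re - l₀)) * Real.exp (l₀ * t) := by
  set δ₁ : ℝ := l₁.re - l₀ with hδ₁def
  set δ₂ : ℝ := l₂.re - l₀ with hδ₂def
  have hδ₁ : 0 < δ₁ := by simp [hδ₁def]; linarith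
  have hδ₂ : 0 < δ₂ := by simp [hδ₂def]; linarith
  set u' : ℝ → ℝ := derivWithin u (Ici T) with hu'def
  set u'' : ℝ → ℝ := derivWithin u' (Ici T) with hu''def
  set V : ℝ → ℂ := fun t => (u' t : ℂ) - l₁ * (u t : ℂ) with hVdef
  set g : ℝ → ℂ := fun t => Complex.exp (-l₂ * t) * V t with hgdef
  set h : ℝ → ℂ := fun t => Complex.exp (-l₁ * t) * (u t : ℂ) with hhdef
  -- complex casts of derivatives
  have hucc : ∀ t ∈ Ici T, HasDerivWithinAt (fun s => ((u s : ℂ))) ((u' t : ℂ)) (Ici T) t := by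
    intro t ht
    exact Complex.ofRealCLM.hasFDerivAt.comp_hasDerivWithinAt t (hu' t ht)
  have hu'cc : ∀ t ∈ Ici T, HasDerivWithinAt (fun s => ((u' s : ℂ))) ((u'' t : ℂ)) (Ici T) t := by
    intro t ht
    exact Complex.ofRealCLM.hasFDerivAt.comp_hasDerivWithinAt t (hu'' t ht)
  -- derivative of V
  have hVd : ∀ t ∈ Ici T, HasDerivWithinAt V
      (l₂ * V t + ((B₀ - B t : ℝ) : ℂ) * (u t : ℂ)) (Ici T) t := by
    intro t ht
    have h1 := (hu'cc t ht).sub ((hucc t ht).const_mul l₁)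
    have hodec : ((u'' t : ℂ)) = (A : ℂ) * (u' t : ℂ) - (B t : ℂ) * (u t : ℂ) := by
      have := hode t ht
      have : u'' t = A * u' t - B t * u t := by linarith
      exact_mod_cast congrArg (fun x : ℝ => (x : ℂ)) this
    refine h1.congr_deriv (Eq.symm ?_)
    rw [hVdef]
    push_cast [hodec]
    linear_combination (↑(u' t) : ℂ) * hsum - (↑(u t) : ℂ) * hprod
  -- derivative of g
  have hgd : ∀ t ∈ Ici T, HasDerivWithinAt g
      (Complex.exp (-l₂ * t) * (((B₀ - B t : ℝ) : ℂ) * (u t : ℂ))) (Ici T) t := by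
    intro t ht
    have hexp := (hasDerivAt_cexp_mul (-l₂) t).hasDerivWithinAt (s := Ici T)
    have h1 := hexp.mul (hVd t ht)
    refine h1.congr_deriv (Eq.symm ?_)
    ring
  -- derivative of h
  have hhd : ∀ t ∈ Ici T, HasDerivWithinAt h
      (Complex.exp (-l₁ * t) * V t) (Ici T) t := by
    intro t ht
    have hexp := (hasDerivAt_cexp_mul (-l₁) t).hasDerivWithinAt (s := Ici T)
    have h1 := hexp.mul (hucc t ht)
    refine h1.congr_deriv (Eq.symm ?_)
    rw [hVdef]
    ring
  -- continuity
  have hVcont : ContinuousOn V (Ici T) := by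
    refine ContinuousOn.sub ?_ ?_
    · exact Complex.continuous_ofReal.comp_continuousOn hu'cont
    · exact continuousOn_const.mul (Complex.continuous_ofReal.comp_continuousOn hucont)
  have huccont : ContinuousOn (fun t : ℝ => (u t : ℂ)) (Ici T) :=
    Complex.continuous_ofReal.comp_continuousOn hucont
  have hgcont : ContinuousOn g (Ici T) :=
    (cont_cexp (-l₂)).continuousOn.mul hVcont
  have hhcont : ContinuousOn h (Ici T) :=
    (cont_cexp (-l₁)).continuousOn.mul huccont
  have hIciT : Ici T₁ ⊆ Ici T := Ici_subset_Ici.2 hT₁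
  have hIoisub : Ioi T₁ ⊆ Ici T := fun x hx => le_trans hT₁ (le_of_lt hx)
  have hmem : ∀ x ∈ Ioi T₁, Ici T ∈ 𝓝 x := fun x hx => Ici_mem_nhds (lt_of_le_of_lt hT₁ hx)
  -- bound on the forcing term
  have hfb : ∀ s ∈ Ioi T₁,
      ‖Complex.exp (-l₂ * s) * (((B₀ - B s : ℝ) : ℂ) * (u s : ℂ))‖
        ≤ ε * m * Real.exp (-(δ₂ * s)) := by
    intro s hs
    have hs' : s ∈ Ici T₁ := show T₁ ≤ s from le_of_lt hs
    have e1 : ‖Complex.exp (-l₂ * (s : ℂ))‖ = Real.exp (-(l₂.re * s)) := by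
      rw [norm_exp_mul_ofReal]; congr 1; simp
    calc ‖Complex.exp (-l₂ * s) * (((B₀ - B s : ℝ) : ℂ) * (u s : ℂ))‖
        = Real.exp (-(l₂.re * s)) * (|B₀ - B s| * |u s|) := by
          rw [norm_mul, norm_mul, e1, Complex.norm_real, Complex.norm_real,
            Real.norm_eq_abs, Real.norm_eq_abs]
      _ ≤ Real.exp (-(l₂.re * s)) * (ε * (m * Real.exp (l₀ * s))) := by
          have h1 : |B₀ - B s| ≤ ε := by rw [abs_sub_comm]; exact hB s hs'
          have h2 := hub s hs'
          have := mul_le_mul h1 h2 (abs_nonneg _) hε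
          exact mul_le_mul_of_nonneg_left (by linarith [this]) (le_of_lt (Real.exp_pos _))
      _ = ε * m * Real.exp (-(δ₂ * s)) := by
          rw [show -(δ₂ * s) = -(l₂.re * s) + l₀ * s by rw [hδ₂def]; ring, Real.exp_add]
          ring
  -- tail estimate for g
  obtain ⟨L, hgL, hgtail⟩ := tail_estimate
    (fun t ht => (hgd t (hIoisub ht)).hasDerivAt (hmem t ht))
    (hgcont.mono hIciT)
    (((cont_cexp (-l₂)).continuousOn.mono (subset_univ _)).mul
      ((Complex.continuous_ofReal.comp_continuousOn
        (continuousOn_const.sub (hBcont.mono hIoisub))).mul (huccont.mono hIoisub)))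
    hδ₂ hfb
  -- h tends to 0
  have hh0 : Tendsto h atTop (𝓝 0) := by
    refine squeeze_zero_norm' (a := fun t => m * Real.exp (-(δ₁ * t))) ?_ (tendsto_exp_decay m hδ₁)
    · filter_upwards [eventually_ge_atTop T₁] with t ht
      have e1 : ‖Complex.exp (-l₁ * (t : ℂ))‖ = Real.exp (-(l₁.re * t)) := by
        rw [norm_exp_mul_ofReal]; congr 1; simp
      rw [hhdef]
      calc ‖Complex.exp (-l₁ * (t:ℝ)) * ((u t : ℝ) : ℂ)‖
          = Real.exp (-(l₁.re * t)) * |u t| := by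
            rw [norm_mul, e1, Complex.norm_real, Real.norm_eq_abs]
        _ ≤ Real.exp (-(l₁.re * t)) * (m * Real.exp (l₀ * t)) := by
            exact mul_le_mul_of_nonneg_left (hub t ht) (le_of_lt (Real.exp_pos _))
        _ = m * Real.exp (-(δ₁ * t)) := by
            rw [show -(δ₁ * t) = -(l₁.re * t) + l₀ * t by rw [hδ₁def]; ring, Real.exp_add]
            ring
  -- the auxiliary integral I
  set μ : ℂ := l₂ - l₁ with hμdef
  have hμre : 0 ≤ μ.re := by simp [hμdef]; linarith
  set I : ℝ → ℂ := fun t => ∫ s in (T₁ : ℝ)..t, Complex.exp (μ * s) with hIdef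
  have hId : ∀ t : ℝ, HasDerivAt I (Complex.exp (μ * t)) t := by
    intro t
    refine _root_.intervalIntegral.integral_hasDerivAt_right
      ((cont_cexp μ).intervalIntegrable _ _)
      ((cont_cexp μ).stronglyMeasurable.stronglyMeasurableAtFilter)
      (cont_cexp μ).continuousAt
  have hIcont : Continuous I := by
    refine continuous_iff_continuousAt.2 fun t => (hId t).continuousAt
  -- ψ = h - L * I
  set ψ : ℝ → ℂ := fun t => h t - L * I t with hψdef
  have hψd : ∀ t ∈ Ioi T₁, HasDerivAt ψ (Complex.exp (μ * t) * (g t - L)) t := by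
    intro t ht
    have h1 := ((hhd t (hIoisub ht)).hasDerivAt (hmem t ht)).sub ((hId t).const_mul L)
    refine h1.congr_deriv (Eq.symm ?_)
    have e1 : Complex.exp (μ * t) * g t = Complex.exp (-l₁ * t) * V t := by
      rw [hgdef]
      rw [← mul_assoc, exp_mul_add]
      congr 2
      rw [hμdef]; ring
    rw [mul_sub, e1]
    ring
  have hψb : ∀ s ∈ Ioi T₁,
      ‖Complex.exp (μ * s) * (g s - L)‖ ≤ (ε * m / δ₂) * Real.exp (-(δ₁ * s)) := by
    intro s hs
    rw [norm_mul, norm_exp_mul_ofReal]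
    calc Real.exp (μ.re * s) * ‖g s - L‖
        ≤ Real.exp (μ.re * s) * (ε * m * Real.exp (-(δ₂ * s)) / δ₂) := by
          exact mul_le_mul_of_nonneg_left (hgtail s (show T₁ ≤ s from le_of_lt hs)) (le_of_lt (Real.exp_pos _))
      _ = (ε * m / δ₂) * Real.exp (-(δ₁ * s)) := by
          rw [show -(δ₁ * s) = μ.re * s + -(δ₂ * s) by
            rw [hδ₁def, hδ₂def, hμdef]; simp [Complex.sub_re]; ring, Real.exp_add]
          ring
  obtain ⟨W, hψW, -⟩ := tail_estimate hψd
    ((hhcont.mono hIciT).sub (continuousOn_const.mul hIcont.continuousOn))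
    (((cont_cexp μ).continuousOn).mul ((hgcont.mono hIoisub).sub continuousOn_const))
    hδ₁ hψb
  -- L * I tends to a limit
  have hLI : Tendsto (fun t => L * I t) atTop (𝓝 (0 - W)) := by
    have := hh0.sub hψW
    refine this.congr fun t => ?_
    rw [hψdef]; ring
  -- L = 0
  have hL0 : L = 0 := by
    by_cases hμ0 : μ = 0
    · refine forced_zero_linear (a := T₁) (w := 0 - W) ?_
      refine hLI.congr fun t => ?_
      congr 1
      rw [hIdef]
      simp only [hμ0, zero_mul, Complex.exp_zero]
      rw [_root_.intervalIntegral.integral_const]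
      simp [Complex.real_smul]
    · have hptwise : ∀ t : ℝ, L * Complex.exp (μ * t)
          = μ * (L * I t) + L * Complex.exp (μ * T₁) := by
        intro t
        rw [hIdef]
        simp only
        rw [_root_.integral_exp_mul_complex hμ0]
        field_simp
        ring
      refine forced_zero_exp hμre hμ0 (w := μ * (0 - W) + L * Complex.exp (μ * T₁)) ?_
      refine Tendsto.congr (fun t => (hptwise t).symm) ?_
      exact ((hLI.const_mul μ).add_const _)
  -- V bound
  have hVb : ∀ t ∈ Ici T₁, ‖V t‖ ≤ ε * m / δ₂ * Real.exp (l₀ * t) := by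
    intro t ht
    have e1 : V t = Complex.exp (l₂ * t) * g t := by
      rw [hgdef]
      simp only
      rw [← mul_assoc, exp_mul_add]
      simp
    rw [e1, norm_mul, norm_exp_mul_ofReal]
    have h2 := hgtail t ht
    rw [hL0, sub_zero] at h2
    calc Real.exp (l₂.re * t) * ‖g t‖
        ≤ Real.exp (l₂.re * t) * (ε * m * Real.exp (-(δ₂ * t)) / δ₂) :=
          mul_le_mul_of_nonneg_left h2 (le_of_lt (Real.exp_pos _))
      _ = ε * m / δ₂ * Real.exp (l₀ * t) := by
          rw [show l₀ * t = l₂.re * t + -(δ₂ * t) by rw [hδ₂def]; ring, Real.exp_add]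
          ring
  -- tail estimate for h
  have hhb : ∀ s ∈ Ioi T₁,
      ‖Complex.exp (-l₁ * s) * V s‖ ≤ (ε * m / δ₂) * Real.exp (-(δ₁ * s)) := by
    intro s hs
    rw [norm_mul]
    have e1 : ‖Complex.exp (-l₁ * (s : ℂ))‖ = Real.exp (-(l₁.re * s)) := by
      rw [norm_exp_mul_ofReal]; congr 1; simp
    rw [e1]
    calc Real.exp (-(l₁.re * s)) * ‖V s‖
        ≤ Real.exp (-(l₁.re * s)) * (ε * m / δ₂ * Real.exp (l₀ * s)) :=
          mul_le_mul_of_nonneg_left (hVb s (show T₁ ≤ s from le_of_lt hs)) (le_of_lt (Real.exp_pos _))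
      _ = (ε * m / δ₂) * Real.exp (-(δ₁ * s)) := by
          rw [show -(δ₁ * s) = -(l₁.re * s) + l₀ * s by rw [hδ₁def]; ring, Real.exp_add]
          ring
  obtain ⟨L', hhL', hhtail⟩ := tail_estimate
    (fun t ht => (hhd t (hIoisub ht)).hasDerivAt (hmem t ht))
    (hhcont.mono hIciT)
    (((cont_cexp (-l₁)).continuousOn).mul (hVcont.mono hIoisub))
    hδ₁ hhb
  have hL'0 : L' = 0 := tendsto_nhds_unique hhL' hh0
  rw [hL'0] at hhtail
  -- conclude
  intro t ht
  have e1 : ((u t : ℝ) : ℂ) = Complex.exp (l₁ * t) * h t := by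
    rw [hhdef]
    simp only
    rw [← mul_assoc, exp_mul_add]
    simp
  have e2 : |u t| = ‖((u t : ℝ) : ℂ)‖ := by
    rw [Complex.norm_real, Real.norm_eq_abs]
  rw [e2, e1, norm_mul, norm_exp_mul_ofReal]
  have h3 := hhtail t ht
  rw [sub_zero] at h3
  calc Real.exp (l₁.re * t) * ‖h t‖
      ≤ Real.exp (l₁.re * t) * (ε * m / δ₂ * Real.exp (-(δ₁ * t)) / δ₁) :=
        mul_le_mul_of_nonneg_left h3 (le_of_lt (Real.exp_pos _))
    _ = ε * m / (δ₂ * δ₁) * Real.exp (l₀ * t) := by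
        rw [show l₀ * t = l₁.re * t + -(δ₁ * t) by rw [hδ₁def]; ring, Real.exp_add]
        field_simp
    _ = ε * m / ((l₂.re - l₀) * (l₁.re - l₀)) * Real.exp (l₀ * t) := by
        rw [hδ₁def, hδ₂def]

lemma tail_zero
    (A T B₀ : ℝ) (B : ℝ → ℝ) (l₁ l₂ : ℂ)
    (hsum : l₁ + l₂ = (A : ℂ)) (hprod : l₁ * l₂ = (B₀ : ℂ))
    (hord : l₁.re ≤ l₂.re)
    (hBcont : ContinuousOn B (Ici T))
    (hBlim : Tendsto B atTop (𝓝 B₀))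
    (u : ℝ → ℝ)
    (hucont : ContinuousOn u (Ici T))
    (hu'cont : ContinuousOn (derivWithin u (Ici T)) (Ici T))
    (hu' : ∀ t ∈ Ici T, HasDerivWithinAt u (derivWithin u (Ici T) t) (Ici T) t)
    (hu'' : ∀ t ∈ Ici T, HasDerivWithinAt (derivWithin u (Ici T))
        (derivWithin (derivWithin u (Ici T)) (Ici T) t) (Ici T) t)
    (hode : ∀ t ∈ Ici T,
      derivWithin (derivWithin u (Ici T)) (Ici T) t
        - A * derivWithin u (Ici T) t + B t * u t = 0)
    (l₀ c : ℝ) (hl₀ : l₀ < l₁.re) (hc : 0 < c)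
    (hbound : ∀ t ∈ Ici T, |u t| ≤ c * Real.exp (l₀ * t)) :
    ∃ T₁, T ≤ T₁ ∧ ∀ t ∈ Ici T₁, u t = 0 := by
  set δ : ℝ := (l₂.re - l₀) * (l₁.re - l₀) with hδdef
  have hδpos : 0 < δ := by
    apply mul_pos <;> [skip; skip] <;> simp [hδdef] <;> linarith
  set ε : ℝ := δ / 2 with hεdef
  have hεpos : 0 < ε := by positivity
  obtain ⟨N, hN⟩ := (Metric.tendsto_atTop.1 hBlim ε hεpos)
  set T₁ : ℝ := max N T with hT₁def
  have hT₁T : T ≤ T₁ := le_max_right _ _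
  have hB : ∀ t ∈ Ici T₁, |B t - B₀| ≤ ε := by
    intro t ht
    have := hN t (le_trans (le_max_left N T) ht)
    rw [Real.dist_eq] at this
    exact le_of_lt this
  have key : ∀ n : ℕ, ∀ t ∈ Ici T₁, |u t| ≤ c / 2 ^ n * Real.exp (l₀ * t) := by
    intro n
    induction n with
    | zero => simpa using fun t ht => hbound t (le_trans hT₁T ht)
    | succ n ih =>
      have hm : (0 : ℝ) ≤ c / 2 ^ n := by positivity
      have := core A T B₀ B l₁ l₂ hsum hprod hord hBcont u hucont hu'cont hu' hu'' hode
        l₀ hl₀ T₁ ε (c / 2 ^ n) hT₁T (le_of_lt hεpos) hm hB ih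
      intro t ht
      refine le_trans (this t ht) (le_of_eq ?_)
      rw [← hδdef, hεdef]
      field_simp
      ring
  refine ⟨T₁, hT₁T, fun t ht => ?_⟩
  have hle : |u t| ≤ 0 := by
    have hlim : Tendsto (fun n : ℕ => c / 2 ^ n * Real.exp (l₀ * t)) atTop (𝓝 0) := by
      have h1 : Tendsto (fun n : ℕ => c / 2 ^ n) atTop (𝓝 0) := by
        simpa [div_eq_mul_inv, ← inv_pow] using
          (tendsto_pow_atTop_nhds_zero_of_lt_one (by norm_num : (0:ℝ) ≤ 2⁻¹)
            (by norm_num : (2 : ℝ)⁻¹ < 1)).const_mul c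
      simpa using h1.mul_const (Real.exp (l₀ * t))
    exact ge_of_tendsto' hlim fun n => key n t ht
  have := abs_nonneg (u t)
  have : |u t| = 0 := le_antisymm hle this
  exact abs_eq_zero.1 this

lemma backward_zero
    (A T T₁ : ℝ) (B : ℝ → ℝ) (hT₁ : T ≤ T₁)
    (hBcont : ContinuousOn B (Ici T))
    (u : ℝ → ℝ)
    (hucont : ContinuousOn u (Ici T))
    (hu'cont : ContinuousOn (derivWithin u (Ici T)) (Ici T))
    (hu' : ∀ t ∈ Ici T, HasDerivWithinAt u (derivWithin u (Ici T) t) (Ici T) t)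
    (hu'' : ∀ t ∈ Ici T, HasDerivWithinAt (derivWithin u (Ici T))
        (derivWithin (derivWithin u (Ici T)) (Ici T) t) (Ici T) t)
    (hode : ∀ t ∈ Ici T,
      derivWithin (derivWithin u (Ici T)) (Ici T) t
        - A * derivWithin u (Ici T) t + B t * u t = 0)
    (htail : ∀ t ∈ Ici T₁, u t = 0) :
    ∀ t ∈ Ici T, u t = 0 := by
  set u' : ℝ → ℝ := derivWithin u (Ici T) with hu'def
  set u'' : ℝ → ℝ := derivWithin u' (Ici T) with hu''def
  set T₂ : ℝ := T₁ + 1 with hT₂def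
  have hTT₂ : T ≤ T₂ := by linarith
  have hT₁T₂ : T₁ < T₂ := by linarith
  set clamp : ℝ → ℝ := fun t => max T (min t T₂) with hclampdef
  have hclampcont : Continuous clamp :=
    continuous_const.max (continuous_id.min continuous_const)
  have hclampmem : ∀ t, clamp t ∈ Icc T T₂ := by
    intro t
    constructor
    · exact le_max_left _ _
    · exact max_le hTT₂ (min_le_right _ _)
  have hclampeq : ∀ t ∈ Icc T T₂, clamp t = t := by
    intro t ht
    rw [hclampdef]
    simp only
    rw [min_eq_left ht.2, max_eq_right ht.1]
  set Bc : ℝ → ℝ := fun t => B (clamp t) with hBcdef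
  have hBccont : Continuous Bc :=
    hBcont.comp_continuous hclampcont fun x => (hclampmem x).1
  obtain ⟨M, hM⟩ := (isCompact_Icc (a := T) (b := T₂)).exists_bound_of_continuousOn
    (hBcont.mono Icc_subset_Ici_self)
  have hMBc : ∀ t, |Bc t| ≤ max M 0 := by
    intro t
    refine le_trans ?_ (le_max_left _ _)
    simpa [Real.norm_eq_abs] using hM (clamp t) (hclampmem t)
  set Kr : ℝ := 1 + |A| + max M 0 with hKrdef
  have hKr0 : 0 ≤ Kr := by positivity
  set K : NNReal := ⟨Kr, hKr0⟩ with hKdef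
  have hKcoe : (K : ℝ) = Kr := rfl
  set v : ℝ → ℝ × ℝ → ℝ × ℝ := fun t p => (p.2, A * p.2 - Bc t * p.1) with hvdef
  have hv : ∀ t, LipschitzOnWith K (v t) univ := by
    intro t
    refine LipschitzWith.lipschitzOnWith ?_
    refine LipschitzWith.of_dist_le_mul fun p q => ?_
    rw [hKcoe, Prod.dist_eq]
    have h1 : dist p.1 q.1 ≤ dist p q := by rw [Prod.dist_eq]; exact le_max_left _ _
    have h2 : dist p.2 q.2 ≤ dist p q := by rw [Prod.dist_eq]; exact le_max_right _ _
    have hd0 : 0 ≤ dist p q := dist_nonneg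
    refine max_le ?_ ?_
    · calc dist p.2 q.2 ≤ dist p q := h2
        _ ≤ Kr * dist p q := by nlinarith [abs_nonneg A, le_max_right M 0]
    · rw [Real.dist_eq]
      have e1 : A * p.2 - Bc t * p.1 - (A * q.2 - Bc t * q.1)
          = A * (p.2 - q.2) - Bc t * (p.1 - q.1) := by ring
      rw [e1]
      have h3 : |A * (p.2 - q.2) - Bc t * (p.1 - q.1)|
          ≤ |A| * |p.2 - q.2| + |Bc t| * |p.1 - q.1| := by
        refine le_trans (abs_sub _ _) ?_
        rw [abs_mul, abs_mul]
      have h4 : |p.2 - q.2| ≤ dist p q := by rw [← Real.dist_eq]; exact h2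
      have h5 : |p.1 - q.1| ≤ dist p q := by rw [← Real.dist_eq]; exact h1
      have h6 : |Bc t| ≤ max M 0 := hMBc t
      have h7 : 0 ≤ |Bc t| := abs_nonneg _
      have h8 : 0 ≤ |A| := abs_nonneg _
      have h9 : 0 ≤ max M 0 := le_max_right _ _
      rw [hKrdef]
      nlinarith
  set f : ℝ → ℝ × ℝ := fun t => (u t, u' t) with hfdef
  have huniq : EqOn f (fun _ => (0, 0)) (Icc T T₂) := by
    refine ODE_solution_unique_of_mem_Icc_left (fun t _ => hv t)
      ((hucont.mono Icc_subset_Ici_self).prodMk (hu'cont.mono Icc_subset_Ici_self))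
      ?_ (fun t _ => mem_univ _)
      continuousOn_const ?_ (fun t _ => mem_univ _) ?_
    · intro t ht
      have htI : t ∈ Ici T := le_of_lt ht.1
      have hmem : Ici T ∈ 𝓝 t := Ici_mem_nhds ht.1
      have hd1 : HasDerivAt u (u' t) t := (hu' t htI).hasDerivAt hmem
      have hd2 : HasDerivAt u' (u'' t) t := (hu'' t htI).hasDerivAt hmem
      have hprod : HasDerivAt f (u' t, u'' t) t := hd1.prodMk hd2
      have heq : (u' t, u'' t) = v t (f t) := by
        have hodet := hode t htI
        have : u'' t = A * u' t - B t * u t := by linarith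
        rw [hvdef, hfdef]
        simp only
        rw [this, hBcdef]
        simp only
        rw [hclampeq t ⟨le_of_lt ht.1, ht.2⟩]
      rw [← heq]
      exact hprod.hasDerivWithinAt
    · intro t ht
      have hv0 : v t ((0 : ℝ), (0 : ℝ)) = ((0 : ℝ × ℝ)) := by
        rw [hvdef]; simp [Prod.ext_iff]
      show HasDerivWithinAt (fun _ : ℝ => ((0 : ℝ), (0 : ℝ))) (v t ((0 : ℝ), (0 : ℝ))) (Iic t) t
      rw [hv0]
      exact hasDerivWithinAt_const t (Iic t) _
    · -- f T₂ = 0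
      have hu0 : u T₂ = 0 := htail T₂ (by rw [hT₂def]; simp)
      have hnhds : Ici T₁ ∈ 𝓝 T₂ := Ici_mem_nhds hT₁T₂
      have heq0 : u =ᶠ[𝓝 T₂] fun _ => 0 := eventually_of_mem hnhds htail
      have hu'0 : u' T₂ = 0 := by
        rw [hu'def, derivWithin_of_mem_nhds (Ici_mem_nhds (lt_of_le_of_lt hT₁ hT₁T₂))]
        rw [heq0.deriv_eq]
        simp
      rw [hfdef]
      simp only
      rw [hu0, hu'0]
  intro t ht
  by_cases hcase : t ≤ T₂
  · have := huniq ⟨ht, hcase⟩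
    exact congrArg Prod.fst this
  · exact htail t (by push_neg at hcase; exact le_of_lt (lt_trans hT₁T₂ hcase))

lemma main_ordered
    (A T B₀ : ℝ) (B : ℝ → ℝ) (l₁ l₂ : ℂ)
    (hsum : l₁ + l₂ = (A : ℂ)) (hprod : l₁ * l₂ = (B₀ : ℂ))
    (hord : l₁.re ≤ l₂.re)
    (hBcont : ContinuousOn B (Ici T))
    (hBlim : Tendsto B atTop (𝓝 B₀))
    (u : ℝ → ℝ)
    (hreg : ContDiffOn ℝ 2 u (Ici T))
    (hode : ∀ t ∈ Ici T,
      derivWithin (derivWithin u (Ici T)) (Ici T) t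
        - A * derivWithin u (Ici T) t + B t * u t = 0)
    (l₀ c : ℝ) (hl₀ : l₀ < l₁.re) (hc : 0 < c)
    (hbound : ∀ t ∈ Ici T, |u t| ≤ c * Real.exp (l₀ * t)) :
    ∀ t ∈ Ici T, u t = 0 := by
  have hucont : ContinuousOn u (Ici T) := hreg.continuousOn
  have hu' : ∀ t ∈ Ici T, HasDerivWithinAt u (derivWithin u (Ici T) t) (Ici T) t :=
    fun t ht => ((hreg.differentiableOn (by norm_num)) t ht).hasDerivWithinAt
  have hC1 : ContDiffOn ℝ 1 (derivWithin u (Ici T)) (Ici T) :=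
    hreg.derivWithin (uniqueDiffOn_Ici T) (by norm_num)
  have hu'cont : ContinuousOn (derivWithin u (Ici T)) (Ici T) := hC1.continuousOn
  have hu'' : ∀ t ∈ Ici T, HasDerivWithinAt (derivWithin u (Ici T))
      (derivWithin (derivWithin u (Ici T)) (Ici T) t) (Ici T) t :=
    fun t ht => ((hC1.differentiableOn (by norm_num)) t ht).hasDerivWithinAt
  obtain ⟨T₁, hT₁, htail⟩ := tail_zero A T B₀ B l₁ l₂ hsum hprod hord hBcont hBlim
    u hucont hu'cont hu' hu'' hode l₀ c hl₀ hc hbound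
  exact backward_zero A T T₁ B hT₁ hBcont u hucont hu'cont hu' hu'' hode htail

end DecayRigidity

/-- Decay rigidity for second-order linear ODEs with asymptotically constant coefficients:
if `u'' - A u' + B(t) u = 0` on `[T,∞)` with `B(t) → B₀`, `λ₁, λ₂` are the roots of
`λ² - Aλ + B₀ = 0`, `λ_m = min(Re λ₁, Re λ₂)`, and `|u(t)| ≤ c e^(λ₀ t)` for some
`λ₀ < λ_m`, then `u ≡ 0` on `[T,∞)`. -/
theorem decay_rigidity
    (A T B₀ : ℝ) (B : ℝ → ℝ)
    (hBcont : ContinuousOn B (Ici T))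
    (hBlim : Tendsto B atTop (nhds B₀))
    (l₁ l₂ : ℂ)
    (hroots : ∀ z : ℂ, z ^ 2 - (A : ℂ) * z + (B₀ : ℂ) = (z - l₁) * (z - l₂))
    (lm : ℝ) (hlm : lm = min l₁.re l₂.re)
    (u : ℝ → ℝ)
    (hreg : ContDiffOn ℝ 2 u (Ici T))
    (hode : ∀ t ∈ Ici T,
      derivWithin (derivWithin u (Ici T)) (Ici T) t
        - A * derivWithin u (Ici T) t + B t * u t = 0)
    (l₀ c : ℝ) (hl₀ : l₀ < lm) (hc : 0 < c)
    (hbound : ∀ t ∈ Ici T, |u t| ≤ c * Real.exp (l₀ * t)) :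
    ∀ t ∈ Ici T, u t = 0 := by
  have hprod : l₁ * l₂ = (B₀ : ℂ) := by linear_combination -(hroots 0)
  have hsum : l₁ + l₂ = (A : ℂ) := by linear_combination hroots 1 - hroots 0
  rcases le_total l₁.re l₂.re with hord | hord
  · have hl₀' : l₀ < l₁.re := by rwa [hlm, min_eq_left hord] at hl₀
    exact DecayRigidity.main_ordered A T B₀ B l₁ l₂ hsum hprod hord hBcont hBlim
      u hreg hode l₀ c hl₀' hc hbound
  · have hl₀' : l₀ < l₂.re := by rwa [hlm, min_eq_right hord] at hl₀
    exact DecayRigidity.main_ordered A T B₀ B l₂ l₁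
      (by rw [add_comm]; exact hsum) (by rw [mul_comm]; exact hprod) hord hBcont hBlim
      u hreg hode l₀ c hl₀' hc hbound
end
end
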